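/- arXiv:2410.13089 — 2 statements merged into one kernel-verified Lean document; each statement's English description precedes it below -/
import Mathlib

section
/- Let m ≥ 1 and Z_0 ∈ ℂ with Z_0 ≠ 0. Consider complex scalars i_T, i_R, v_T, v_R, complex column vectors i_I, v_I ∈ ℂ^m, a row vector z_RI ∈ ℂ^{1×m}, a column vector z_IT ∈ ℂ^{m×1}, a scalar z_RT ∈ ℂ, and m×m matrices Z_{II} and Z_I such that Z_I + Z_{II} is invertible. Assume the multiport relations v_T = Z_0 · i_T, v_I = z_IT · i_T + Z_{II} · i_I, v_R = z_RT · i_T + z_RI · i_I + Z_0 · i_R, together with the termination conditions v_I = −Z_I · i_I and v_R = −Z_0 · i_R. Then v_R = h · v_T where h = (1/(2 Z_0)) · ( z_RT − z_RI (Z_I + Z_{II})^{-1} z_IT ). -/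
open Matrix

namespace Matrix

variable {n α : Type*} [Fintype n] [DecidableEq n] [CommRing α]

theorem eq_neg_smul_inv_mulVec_of_terminated {A B : Matrix n n α} (hAB : IsUnit (B + A))
    {v x z : n → α} {c : α} (hopen : v = c • z + A *ᵥ x) (hload : v = -(B *ᵥ x)) :
    x = -(c • ((B + A)⁻¹ *ᵥ z)) := by
  have hsys : (B + A) *ᵥ x = -(c • z) := by
    rw [add_mulVec]
    linear_combination -(hload.symm.trans hopen)
  have := hAB.invertible
  rw [← inv_mulVec_eq_vec hsys.symm, mulVec_neg, mulVec_smul]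

end Matrix

theorem multiport_channel_formula_general
    (m : ℕ) (Z0 : ℂ) (hZ0 : Z0 ≠ 0)
    (iT iR vT vR zRT : ℂ)
    (iI vI zIT zRI : Fin m → ℂ)
    (ZII ZI : Matrix (Fin m) (Fin m) ℂ)
    (hinv : IsUnit (ZI + ZII))
    (h1 : vT = Z0 * iT)
    (h2 : vI = iT • zIT + ZII *ᵥ iI)
    (h3 : vR = zRT * iT + zRI ⬝ᵥ iI + Z0 * iR)
    (h4 : vI = -(ZI *ᵥ iI))
    (h5 : vR = -(Z0 * iR)) :
    vR = (1 / (2 * Z0)) * (zRT - zRI ⬝ᵥ ((ZI + ZII)⁻¹ *ᵥ zIT)) * vT := by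
  have hiI := eq_neg_smul_inv_mulVec_of_terminated hinv h2 h4
  rw [hiI, dotProduct_neg, dotProduct_smul, smul_eq_mul] at h3
  rw [h1]
  field_simp
  -- the matched load `Z0` halves the open-circuit voltage: `h3 + h5` gives `2 * vR = …`
  linear_combination h3 + h5

/-- Under the multiport relations (unilateral approximation, matched
transmit/receive antennas), with the RIS ports terminated by the reconfigurable impedance
network `Z_I` and the receive antenna terminated by the load `Z₀`, the received voltage
satisfies `v_R = h v_T` with `h = (1/(2 Z₀)) (z_RT − z_RI (Z_I + Z_II)⁻¹ z_IT)`. -/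
theorem multiport_channel_formula
    (m : ℕ) (hm : 1 ≤ m) (Z0 : ℂ) (hZ0 : Z0 ≠ 0)
    (iT iR vT vR zRT : ℂ)
    (iI vI zIT zRI : Fin m → ℂ)
    (ZII ZI : Matrix (Fin m) (Fin m) ℂ)
    (hinv : IsUnit (ZI + ZII))
    (h1 : vT = Z0 * iT)
    (h2 : vI = iT • zIT + ZII *ᵥ iI)
    (h3 : vR = zRT * iT + zRI ⬝ᵥ iI + Z0 * iR)
    (h4 : vI = -(ZI *ᵥ iI))
    (h5 : vR = -(Z0 * iR)) :
    vR = (1 / (2 * Z0)) * (zRT - zRI ⬝ᵥ ((ZI + ZII)⁻¹ *ᵥ zIT)) * vT :=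
  multiport_channel_formula_general m Z0 hZ0 iT iR vT vR zRT iI vI zIT zRI ZII ZI hinv h1 h2 h3 h4
    h5
end

section
/- Let L ≥ 2, n ≥ 1, and Z_0 ∈ ℂ with Z_0 ≠ 0. Let Z_{I,1},…,Z_{I,L} be n×n complex matrices with Z_{I,ℓ} + Z_0 I invertible for all ℓ, and define for each ℓ the scattering matrix Θ_ℓ = (Z_{I,ℓ} + Z_0 I)^{-1}(Z_{I,ℓ} − Z_0 I). Let z_{RI,L} ∈ ℂ^{1×n}, z_{IT,1} ∈ ℂ^{n×1}, and Z_{ℓ,ℓ−1} ∈ ℂ^{n×n} for ℓ = 2,…,L, and define h_{RI,L} = z_{RI,L}/(2Z_0), h_{IT,1} = z_{IT,1}/(2Z_0), and H_{ℓ,ℓ−1} = Z_{ℓ,ℓ−1}/(2Z_0). Then −((−1)^{L−1}/(2Z_0)) · z_{RI,L} (Z_{I,L} + Z_0 I)^{-1} · (Z_{L,L−1}(Z_{I,L−1}+Z_0 I)^{-1}) ⋯ (Z_{2,1}(Z_{I,1}+Z_0 I)^{-1}) · z_{IT,1} = h_{RI,L} (Θ_L − I) · (H_{L,L−1}(Θ_{L−1}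 − I)) (H_{L−1,L−2}(Θ_{L−2} − I)) ⋯ (H_{2,1}(Θ_1 − I)) · h_{IT,1}, where both ordered products are taken with the index decreasing from L down to 2. -/
open Matrix

private lemma list_prod_map_smul {n : ℕ} (c : ℂ) (f : ℕ → Matrix (Fin n) (Fin n) ℂ) :
    ∀ l : List ℕ, (l.map (fun t => c • f t)).prod = c ^ l.length • (l.map f).prod := by
  intro l
  induction l with
  | nil => simp
  | cons a l ih =>
      simp only [List.map_cons, List.prod_cons, ih, List.length_cons, smul_mul_assoc,
        mul_smul_comm, smul_smul, pow_succ]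

/-- Conversion of the physics-compliant multi-RIS channel from impedance to
scattering parameters: with `Θ_ℓ = (Z_{I,ℓ} + Z₀ I)⁻¹ (Z_{I,ℓ} − Z₀ I)`,
`h_{RI,L} = z_{RI,L}/(2Z₀)`, `h_{IT,1} = z_{IT,1}/(2Z₀)`, `H_{ℓ,ℓ−1} = Z_{ℓ,ℓ−1}/(2Z₀)`,
one has
`−((−1)^{L−1}/(2Z₀)) z_{RI,L} (Z_{I,L}+Z₀I)⁻¹ ∏_{ℓ=L}^{2}(Z_{ℓ,ℓ−1}(Z_{I,ℓ−1}+Z₀I)⁻¹) z_{IT,1}`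
`= h_{RI,L} (Θ_L − I) ∏_{ℓ=L}^{2}(H_{ℓ,ℓ−1}(Θ_{ℓ−1} − I)) h_{IT,1}`,
both ordered products taken with the index decreasing from `L` down to `2`. -/
theorem impedance_to_scattering_channel
    (L n : ℕ) (hL : 2 ≤ L) (hn : 1 ≤ n) (Z0 : ℂ) (hZ0 : Z0 ≠ 0)
    (ZI : ℕ → Matrix (Fin n) (Fin n) ℂ)
    (hZIinv : ∀ ℓ < L, IsUnit (ZI ℓ + Z0 • (1 : Matrix (Fin n) (Fin n) ℂ)))
    (Θ : ℕ → Matrix (Fin n) (Fin n) ℂ)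
    (hΘ : ∀ ℓ < L, Θ ℓ = (ZI ℓ + Z0 • 1)⁻¹ * (ZI ℓ - Z0 • 1))
    (zRI zIT : Fin n → ℂ)
    (Zsub : ℕ → Matrix (Fin n) (Fin n) ℂ)
    (hRI hIT : Fin n → ℂ)
    (H : ℕ → Matrix (Fin n) (Fin n) ℂ)
    (hhRI : hRI = (1 / (2 * Z0)) • zRI)
    (hhIT : hIT = (1 / (2 * Z0)) • zIT)
    (hH : ∀ ℓ, H ℓ = (1 / (2 * Z0)) • Zsub ℓ) :
    -((-1 : ℂ) ^ (L - 1) / (2 * Z0)) *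
        (zRI ⬝ᵥ
          (((ZI (L - 1) + Z0 • 1)⁻¹ *
            (((List.range (L - 1)).map
              (fun t => Zsub (L - 1 - t) * (ZI (L - 2 - t) + Z0 • 1)⁻¹)).prod)) *ᵥ zIT)) =
      hRI ⬝ᵥ
        (((Θ (L - 1) - 1) *
          (((List.range (L - 1)).map
            (fun t => H (L - 1 - t) * (Θ (L - 2 - t) - 1))).prod)) *ᵥ hIT) := by
  have hΘsub : ∀ ℓ < L, Θ ℓ - 1 = (-(2 * Z0)) • (ZI ℓ + Z0 • 1)⁻¹ := by
    intro ℓ hℓ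
    have hu : IsUnit (ZI ℓ + Z0 • (1 : Matrix (Fin n) (Fin n) ℂ)).det :=
      (isUnit_iff_isUnit_det _).mp (hZIinv ℓ hℓ)
    have hinv : (ZI ℓ + Z0 • 1)⁻¹ * (ZI ℓ + Z0 • 1) = (1 : Matrix (Fin n) (Fin n) ℂ) :=
      nonsing_inv_mul _ hu
    have hkey : (ZI ℓ - Z0 • 1) - (ZI ℓ + Z0 • 1) = (-(2 * Z0)) • (1 : Matrix (Fin n) (Fin n) ℂ) := by
      module
    rw [hΘ ℓ hℓ]
    calc (ZI ℓ + Z0 • 1)⁻¹ * (ZI ℓ - Z0 • 1) - 1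
        = (ZI ℓ + Z0 • 1)⁻¹ * (ZI ℓ - Z0 • 1) - (ZI ℓ + Z0 • 1)⁻¹ * (ZI ℓ + Z0 • 1) := by
          rw [hinv]
      _ = (ZI ℓ + Z0 • 1)⁻¹ * ((ZI ℓ - Z0 • 1) - (ZI ℓ + Z0 • 1)) := (mul_sub _ _ _).symm
      _ = (-(2 * Z0)) • (ZI ℓ + Z0 • 1)⁻¹ := by rw [hkey, mul_smul_comm, mul_one]
  have hmap : (List.range (L - 1)).map (fun t => H (L - 1 - t) * (Θ (L - 2 - t) - 1))
      = (List.range (L - 1)).map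
        (fun t => (-1 : ℂ) • (Zsub (L - 1 - t) * (ZI (L - 2 - t) + Z0 • 1)⁻¹)) := by
    apply List.map_congr_left
    intro t ht
    rw [hH, hΘsub (L - 2 - t) (by omega), smul_mul_assoc, mul_smul_comm, smul_smul]
    congr 1
    field_simp
  rw [hmap, list_prod_map_smul, List.length_range,
    hΘsub (L - 1) (by omega), hhRI, hhIT]
  rw [smul_mul_assoc, mul_smul_comm, smul_smul]
  simp only [smul_mulVec, mulVec_smul, smul_dotProduct, dotProduct_smul, smul_eq_mul]
  field_simp
end
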